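/- arXiv:2510.25202 — 2 statements merged into one kernel-verified Lean document; each statement's English description precedes it below -/
import Mathlib

section
/- For every integer t ≥ 1, d_Q(t) ≤ d_K(t−1) and d_K(t) ≤ d_Q(t−1), where d_Q(t) := max_{g∈G*} ‖Q^t(g,·) − π_Q‖_TV and d_K(t) := max_{x∈X} ‖K^t(x,·) − π_K‖_TV. -/
open Finset

variable (G X : Type) [Group G] [Fintype G] [DecidableEq G]
  [Fintype X] [DecidableEq X] [Nonempty X] [MulAction G X]

noncomputable section

/-- The fixed-point set `X_g = {x ∈ X : g • x = x}` of a group element. -/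
def fixedPts (g : G) : Finset X := Finset.univ.filter fun x => g • x = x

/-- The stabilizer `G_x = {g ∈ G : g • x = x}` of a point, as a finset. -/
def stab (x : X) : Finset G := Finset.univ.filter fun g => g • x = x

/-- `G* = {g ∈ G : X_g ≠ ∅}`. -/
def Gstar : Finset G := Finset.univ.filter fun g => (fixedPts G X g).Nonempty

/-- The dual Burnside kernel `Q(g,h) = ∑_{x ∈ X_g ∩ X_h} 1/(|X_g|·|G_x|)`. -/
def Q (g h : G) : ℝ :=
  ∑ x ∈ fixedPts G X g ∩ fixedPts G X h,
    1 / (((fixedPts G X g).card : ℝ) * ((stab G X x).card : ℝ))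

/-- The primal Burnside kernel `K(x,y) = ∑_{g ∈ G_x ∩ G_y} 1/(|G_x|·|X_g|)`. -/
def K (x y : X) : ℝ :=
  ∑ g ∈ stab G X x ∩ stab G X y,
    1 / (((stab G X x).card : ℝ) * ((fixedPts G X g).card : ℝ))

/-- The forward leg `A(g,x) = 1_{x ∈ X_g}/|X_g|`. -/
def A (g : G) (x : X) : ℝ :=
  if x ∈ fixedPts G X g then 1 / ((fixedPts G X g).card : ℝ) else 0

/-- The backward leg `B(x,h) = 1_{h ∈ G_x}/|G_x|`. -/
def B (x : X) (h : G) : ℝ :=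
  if h ∈ stab G X x then 1 / ((stab G X x).card : ℝ) else 0


/-- `z = |X/G|`, the number of `G`-orbits on `X`. -/
def numOrbits : ℕ := Nat.card (Quotient (MulAction.orbitRel G X))

/-- The dual stationary law `π_Q(g) = |X_g| / (z·|G|)`. -/
def piQ (g : G) : ℝ :=
  ((fixedPts G X g).card : ℝ) / ((numOrbits G X : ℝ) * (Fintype.card G : ℝ))

/-- The primal stationary law `π_K(x) = |G_x| / (z·|G|)`. -/
def piK (x : X) : ℝ :=
  ((stab G X x).card : ℝ) / ((numOrbits G X : ℝ) * (Fintype.card G : ℝ))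

/-- The dual kernel as a matrix indexed by `G*`. -/
def Qmat : Matrix (Gstar G X) (Gstar G X) ℝ := fun g h => Q G X g.1 h.1

/-- The primal kernel as a matrix indexed by `X`. -/
def Kmat : Matrix X X ℝ := fun x y => K G X x y

/-- Total variation distance of `Q^t(g,·)` from `π_Q`. -/
def tvQ (t : ℕ) (g : Gstar G X) : ℝ :=
  (1 / 2) * ∑ h : Gstar G X, |(Qmat G X ^ t) g h - piQ G X h.1|

/-- Total variation distance of `K^t(x,·)` from `π_K`. -/
def tvK (t : ℕ) (x : X) : ℝ :=
  (1 / 2) * ∑ y : X, |(Kmat G X ^ t) x y - piK G X y|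

/-- Worst-case total variation distance for the dual chain: `d_Q(t) = max_{g∈G*} tvQ t g`. -/
def dQ (t : ℕ) : ℝ := ⨆ g : Gstar G X, tvQ G X t g

/-- Worst-case total variation distance for the primal chain: `d_K(t) = max_{x∈X} tvK t x`. -/
def dK (t : ℕ) : ℝ := ⨆ x : X, tvK G X t x

/-!
Both kernels factor through the two legs: `Q = A B` on `G*` and `K = B A` on `X`, where `A`
moves from `g` to a uniform fixed point of `g` and `B` from `x` to a uniform element of `G_x`.
Both legs are stochastic, `B` carries `π_K` to `π_Q` and `A` carries `π_Q` to `π_K`. Hence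
`Q^t = A K^(t-1) B` and `K^t = B Q^(t-1) A`, and the bounds follow because the distance of
`μ P` to a law `ν` is at most the `μ`-average of the distances of the rows of `P` to `ν`, and
a stochastic matrix does not increase total variation.
-/

def tvDist {σ : Type*} [Fintype σ] (μ ν : σ → ℝ) : ℝ := (1 / 2) * ∑ s, |μ s - ν s|

namespace Matrix

variable {κ σ ι : Type*} [Fintype κ] [Fintype σ] [Fintype ι]

-- `Matrix.rowStochastic` only covers square matrices; the two legs are rectangular.
structure IsStochastic (M : Matrix σ ι ℝ) : Prop where
  nonneg : ∀ s i, 0 ≤ M s i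
  sum_row : ∀ s, ∑ i, M s i = 1

theorem sum_abs_vecMul_le (v : σ → ℝ) (M : Matrix σ ι ℝ) :
    ∑ i, |(v ᵥ* M) i| ≤ ∑ s, |v s| * ∑ i, |M s i| := by
  calc ∑ i, |(v ᵥ* M) i| ≤ ∑ i, ∑ s, |v s| * |M s i| := by
        gcongr with i
        simpa only [vecMul, dotProduct, abs_mul] using
          abs_sum_le_sum_abs (fun s => v s * M s i) univ
    _ = ∑ s, |v s| * ∑ i, |M s i| := by rw [sum_comm]; simp only [mul_sum]

theorem IsStochastic.tvDist_vecMul_le {b : Matrix σ ι ℝ} (hb : b.IsStochastic) (μ ν : σ → ℝ) :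
    tvDist (μ ᵥ* b) (ν ᵥ* b) ≤ tvDist μ ν := by
  have h := sum_abs_vecMul_le (μ - ν) b
  simp only [sub_vecMul, abs_of_nonneg (hb.nonneg _ _), hb.sum_row, mul_one] at h
  unfold tvDist
  gcongr
  exact h

theorem tvDist_vecMul_le_sum {w : κ → ℝ} (hw0 : ∀ k, 0 ≤ w k) (hw1 : ∑ k, w k = 1)
    (P : Matrix κ σ ℝ) (ν : σ → ℝ) : tvDist (w ᵥ* P) ν ≤ ∑ k, w k * tvDist (P k) ν := by
  -- since `w` has mass one, `w ᵥ* P - ν` is `w` applied to the rows `P k - ν`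
  have hsub : w ᵥ* P - ν = w ᵥ* of fun k s => P k s - ν s := by
    ext s
    simp [vecMul, dotProduct, mul_sub, sum_sub_distrib, ← sum_mul, hw1]
  have h := sum_abs_vecMul_le w (of fun k s => P k s - ν s)
  rw [← hsub] at h
  simp only [abs_of_nonneg (hw0 _), of_apply, Pi.sub_apply] at h
  calc tvDist (w ᵥ* P) ν ≤ 1 / 2 * ∑ k, w k * ∑ s, |P k s - ν s| := by unfold tvDist; gcongr
    _ = ∑ k, w k * tvDist (P k) ν := by unfold tvDist; rw [mul_sum]; congr 1; ext k; ring

theorem IsStochastic.tvDist_mul_mul_le {κ' : Type*} {a : Matrix κ' κ ℝ} {b : Matrix σ ι ℝ}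
    (ha : a.IsStochastic) (hb : b.IsStochastic) (P : Matrix κ σ ℝ) (ν : σ → ℝ) {d : ℝ}
    (hd : ∀ k, tvDist (P k) ν ≤ d) (g : κ') :
    tvDist ((a * P * b) g) (ν ᵥ* b) ≤ d :=
  calc tvDist ((a * P * b) g) (ν ᵥ* b)
      ≤ tvDist ((a * P) g) ν := by rw [mul_apply_eq_vecMul]; exact hb.tvDist_vecMul_le _ _
    _ ≤ ∑ k, a g k * tvDist (P k) ν := by
        rw [mul_apply_eq_vecMul]; exact tvDist_vecMul_le_sum (ha.nonneg g) (ha.sum_row g) P ν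
    _ ≤ ∑ k, a g k * d := by gcongr with k; exacts [ha.nonneg g k, hd k]
    _ = d := by rw [← sum_mul, ha.sum_row, one_mul]

theorem mul_pow_succ {m n α : Type*} [Fintype m] [Fintype n] [DecidableEq m] [DecidableEq n]
    [Semiring α] (P : Matrix m n α) (R : Matrix n m α) (s : ℕ) :
    (P * R) ^ (s + 1) = P * (R * P) ^ s * R := by
  induction s with
  | zero => simp
  | succ s ih => rw [pow_succ, ih, pow_succ]; simp only [Matrix.mul_assoc]

theorem IsStochastic.tvDist_pow_succ_le {m n : Type*} [Fintype m] [Fintype n] [DecidableEq m]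
    [DecidableEq n] {a : Matrix m n ℝ} {b : Matrix n m ℝ} (ha : a.IsStochastic)
    (hb : b.IsStochastic) (π : n → ℝ) (s : ℕ) {d : ℝ} (hd : ∀ x, tvDist (((b * a) ^ s) x) π ≤ d)
    (g : m) : tvDist (((a * b) ^ (s + 1)) g) (π ᵥ* b) ≤ d := by
  rw [mul_pow_succ]
  exact ha.tvDist_mul_mul_le hb _ π hd g

end Matrix

def Amat : Matrix (Gstar G X) X ℝ := .of fun g x => A G X g x

def Bmat : Matrix X (Gstar G X) ℝ := .of fun x g => B G X x g

section Burnside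

open Matrix

variable {G X : Type} [Group G] [MulAction G X] [Fintype G] [DecidableEq X]

theorem card_stab_pos (x : X) : 0 < (stab G X x).card :=
  card_pos.mpr ⟨1, by simp [stab]⟩

theorem piK_mul_B [DecidableEq G] (x : X) (g : G) :
    piK G X x * B G X x g =
      if g ∈ stab G X x then ((numOrbits G X : ℝ) * (Fintype.card G : ℝ))⁻¹ else 0 := by
  have : (stab G X x).card ≠ 0 := (card_stab_pos x).ne'
  unfold piK B
  split_ifs
  · field_simp
  · rw [mul_zero]

variable [Fintype X]

theorem mem_fixedPts_iff_mem_stab {g : G} {x : X} : x ∈ fixedPts G X g ↔ g ∈ stab G X x := by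
  simp [fixedPts, stab]

theorem stab_subset_Gstar (x : X) : stab G X x ⊆ Gstar G X := fun g hg => by
  simpa [Gstar] using ⟨x, mem_fixedPts_iff_mem_stab.mpr hg⟩

instance [Nonempty X] : Nonempty (Gstar G X) :=
  ⟨⟨1, stab_subset_Gstar (Classical.arbitrary X) (by simp [stab])⟩⟩

theorem sum_Gstar_ite_mem [DecidableEq G] {s : Finset G} (hs : s ⊆ Gstar G X) (f : G → ℝ) :
    ∑ g : Gstar G X, (if g.1 ∈ s then f g else 0) = ∑ g ∈ s, f g := by
  rw [sum_coe_sort (Gstar G X) fun g => if g ∈ s then f g else 0, sum_ite_mem,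
    inter_eq_right.mpr hs]

theorem isStochastic_Amat : (Amat G X).IsStochastic where
  nonneg g x := by simp only [Amat, A, of_apply]; split_ifs <;> positivity
  sum_row g := by
    have hne : (fixedPts G X g).Nonempty := by simpa [Gstar] using g.2
    simp [Amat, A, sum_ite_mem, hne.card_pos.ne']

variable [DecidableEq G]

theorem isStochastic_Bmat : (Bmat G X).IsStochastic where
  nonneg x g := by simp only [Bmat, B, of_apply]; split_ifs <;> positivity
  sum_row x := by
    simp only [Bmat, B, of_apply]
    rw [sum_Gstar_ite_mem (stab_subset_Gstar x) fun _ => _]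
    simp [(card_stab_pos x).ne']

theorem Qmat_eq_Amat_mul_Bmat : Qmat G X = Amat G X * Bmat G X := by
  ext g h
  simp only [Qmat, Q, Amat, Bmat, mul_apply, of_apply, A, B, ← mem_fixedPts_iff_mem_stab,
    ite_zero_mul_ite_zero, ← mem_inter, one_div_mul_one_div]
  rw [sum_ite_mem, univ_inter]

theorem Kmat_eq_Bmat_mul_Amat : Kmat G X = Bmat G X * Amat G X := by
  ext x y
  simp only [Kmat, K, Amat, Bmat, mul_apply, of_apply, A, B, mem_fixedPts_iff_mem_stab,
    ite_zero_mul_ite_zero, ← mem_inter, one_div_mul_one_div]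
  exact (sum_Gstar_ite_mem (inter_subset_left.trans (stab_subset_Gstar x)) _).symm

theorem piQ_mul_A (g : G) (x : X) :
    piQ G X g * A G X g x =
      if g ∈ stab G X x then ((numOrbits G X : ℝ) * (Fintype.card G : ℝ))⁻¹ else 0 := by
  simp only [← mem_fixedPts_iff_mem_stab]
  unfold piQ A
  split_ifs with h
  · have : (fixedPts G X g).card ≠ 0 := (card_pos.mpr ⟨x, h⟩).ne'
    field_simp
  · rw [mul_zero]

theorem piK_vecMul_Bmat : piK G X ᵥ* Bmat G X = fun g : Gstar G X => piQ G X g := by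
  ext g
  simp [vecMul, dotProduct, Bmat, piK_mul_B, ← mem_fixedPts_iff_mem_stab, sum_ite_mem, piQ,
    div_eq_mul_inv]

theorem piQ_vecMul_Amat : (fun g : Gstar G X => piQ G X g) ᵥ* Amat G X = piK G X := by
  ext x
  simp only [vecMul, dotProduct, Amat, of_apply, piQ_mul_A]
  rw [sum_Gstar_ite_mem (stab_subset_Gstar x) fun _ => _]
  simp [piK, div_eq_mul_inv]

end Burnside

/-- One-step TV comparison: `d_Q(t) ≤ d_K(t−1)` and `d_K(t) ≤ d_Q(t−1)` for every `t ≥ 1`. -/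
theorem tv_one_step_comparison (t : ℕ) (ht : 1 ≤ t) :
    dQ G X t ≤ dK G X (t - 1) ∧ dK G X t ≤ dQ G X (t - 1) := by
  obtain ⟨s, rfl⟩ := Nat.exists_eq_add_of_le' ht
  rw [Nat.add_sub_cancel]
  have hK (x : X) : tvDist (((Bmat G X * Amat G X) ^ s) x) (piK G X) ≤ dK G X s := by
    rw [← Kmat_eq_Bmat_mul_Amat]
    exact le_ciSup (f := tvK G X s) (Finite.bddAbove_range _) x
  have hQ (g : Gstar G X) :
      tvDist (((Amat G X * Bmat G X) ^ s) g) (fun h : Gstar G X => piQ G X h) ≤ dQ G X s := by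
    rw [← Qmat_eq_Amat_mul_Bmat]
    exact le_ciSup (f := tvQ G X s) (Finite.bddAbove_range _) g
  constructor
  · refine ciSup_le fun g => ?_
    have := isStochastic_Amat.tvDist_pow_succ_le isStochastic_Bmat (piK G X) s hK g
    rwa [← Qmat_eq_Amat_mul_Bmat, piK_vecMul_Bmat] at this
  · refine ciSup_le fun x => ?_
    have := isStochastic_Bmat.tvDist_pow_succ_le isStochastic_Amat _ s hQ x
    rwa [← Kmat_eq_Bmat_mul_Amat, piQ_vecMul_Amat] at this

end
end

section
/- Suppose δ > 0 and ν is a probability distribution on X such that K(x,y) ≥ δ·ν(y) for all x,y ∈ X. Then the two-step dual kernel satisfies (Q²)(g,h) ≥ δ·(νB)(h) for all g,h ∈ G*, where Q² is the matrix square of Q and (νB)(h) := ∑_{x∈X} ν(x)·B(x,h). -/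
open Finset

variable (G X : Type) [Group G] [Fintype G] [DecidableEq G]
  [Fintype X] [DecidableEq X] [Nonempty X] [MulAction G X]

noncomputable section

set_option linter.unusedSectionVars false

lemma memFixed {g : G} {x : X} : x ∈ fixedPts G X g ↔ g • x = x := by
  simp [fixedPts]

lemma memStab {x : X} {g : G} : g ∈ stab G X x ↔ g • x = x := by
  simp [stab]

lemma A_nonneg (g : G) (x : X) : 0 ≤ A G X g x := by
  unfold A; split <;> positivity

lemma B_nonneg (x : X) (h : G) : 0 ≤ B G X x h := by
  unfold B; split <;> positivity

lemma Q_eq (g h : G) : Q G X g h = ∑ x : X, A G X g x * B G X x h := by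
  rw [Q, ← Finset.sum_subset (Finset.subset_univ (fixedPts G X g ∩ fixedPts G X h))]
  · refine Finset.sum_congr rfl fun x hx => ?_
    rw [Finset.mem_inter] at hx
    rw [A, B, if_pos hx.1, if_pos ((memStab G X).mpr ((memFixed G X).mp hx.2)),
      div_mul_div_comm, one_mul]
  · intro x _ hx
    rw [Finset.mem_inter] at hx
    push_neg at hx
    by_cases h1 : x ∈ fixedPts G X g
    · have hB : h ∉ stab G X x := fun hc => (hx h1) ((memFixed G X).mpr ((memStab G X).mp hc))
      rw [B, if_neg hB, mul_zero]
    · rw [A, if_neg h1, zero_mul]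

lemma K_eq (x y : X) : K G X x y = ∑ f ∈ Gstar G X, B G X x f * A G X f y := by
  have hsub : stab G X x ∩ stab G X y ⊆ Gstar G X := by
    intro f hf
    rw [Finset.mem_inter] at hf
    simp only [Gstar, Finset.mem_filter, Finset.mem_univ, true_and]
    exact ⟨y, (memFixed G X).mpr ((memStab G X).mp hf.2)⟩
  rw [K, ← Finset.sum_subset hsub]
  · refine Finset.sum_congr rfl fun f hf => ?_
    rw [Finset.mem_inter] at hf
    rw [A, B, if_pos hf.1, if_pos ((memFixed G X).mpr ((memStab G X).mp hf.2)),
      div_mul_div_comm, one_mul]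
  · intro f _ hf
    rw [Finset.mem_inter] at hf
    push_neg at hf
    by_cases h1 : f ∈ stab G X x
    · have hA : y ∉ fixedPts G X f := fun hc => (hf h1) ((memStab G X).mpr ((memFixed G X).mp hc))
      rw [A, if_neg hA, mul_zero]
    · rw [B, if_neg h1, zero_mul]

lemma sum_A_eq_one {g : G} (hg : g ∈ Gstar G X) : ∑ x : X, A G X g x = 1 := by
  have hne : (fixedPts G X g).Nonempty := by
    simpa [Gstar] using hg
  have hcard : ((fixedPts G X g).card : ℝ) ≠ 0 := by
    exact_mod_cast Finset.card_ne_zero_of_mem hne.choose_spec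
  unfold A
  rw [Finset.sum_ite_mem, Finset.univ_inter, Finset.sum_const, nsmul_eq_mul,
    mul_one_div, div_self hcard]

/-- Two-step transfer of minorization: if `K ≥ δ·ν` row-wise on `X`,
then `Q²(g,·) ≥ δ·(νB)(·)` on `G*`. -/
theorem two_step_minorization_transfer (δ : ℝ) (hδ : 0 < δ)
    (ν : X → ℝ) (hν0 : ∀ x, 0 ≤ ν x) (hν1 : (∑ x : X, ν x) = 1)
    (hminor : ∀ x y : X, δ * ν y ≤ K G X x y) :
    ∀ g ∈ Gstar G X, ∀ h ∈ Gstar G X,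
      δ * (∑ x : X, ν x * B G X x h) ≤ ∑ f ∈ Gstar G X, Q G X g f * Q G X f h := by
  intro g hg h hh
  have key : ∑ f ∈ Gstar G X, Q G X g f * Q G X f h
      = ∑ x : X, ∑ y : X, A G X g x * K G X x y * B G X y h := by
    calc ∑ f ∈ Gstar G X, Q G X g f * Q G X f h
        = ∑ f ∈ Gstar G X, ∑ x : X, ∑ y : X,
            (A G X g x * B G X x f) * (A G X f y * B G X y h) := by
          simp_rw [Q_eq, Finset.sum_mul_sum]
      _ = ∑ x : X, ∑ y : X, ∑ f ∈ Gstar G X,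
            (A G X g x * B G X x f) * (A G X f y * B G X y h) := by
          rw [Finset.sum_comm]
          exact Finset.sum_congr rfl fun x _ => Finset.sum_comm
      _ = ∑ x : X, ∑ y : X, A G X g x * K G X x y * B G X y h := by
          refine Finset.sum_congr rfl fun x _ => Finset.sum_congr rfl fun y _ => ?_
          rw [K_eq, Finset.mul_sum, Finset.sum_mul]
          exact Finset.sum_congr rfl fun f _ => by ring
  rw [key]
  calc δ * (∑ x : X, ν x * B G X x h)
      = (∑ x : X, A G X g x) * (δ * ∑ y : X, ν y * B G X y h) := by
        rw [sum_A_eq_one G X hg, one_mul]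
    _ = ∑ x : X, ∑ y : X, A G X g x * (δ * ν y) * B G X y h := by
        rw [Finset.sum_mul]
        refine Finset.sum_congr rfl fun x _ => ?_
        simp only [Finset.mul_sum]
        exact Finset.sum_congr rfl fun y _ => by ring
    _ ≤ ∑ x : X, ∑ y : X, A G X g x * K G X x y * B G X y h := by
        refine Finset.sum_le_sum fun x _ => Finset.sum_le_sum fun y _ => ?_
        exact mul_le_mul_of_nonneg_right
          (mul_le_mul_of_nonneg_left (hminor x y) (A_nonneg G X g x))
          (B_nonneg G X y h)

end
end
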